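/- Validity of hierarchical crossover with the repair strategy (Algorithm 1): let p1 = l1 ++ c1 ++ r1 and p2 = l2 ++ c2 ++ r2 be lists with all entries in {1,…,M}, and form the pre-repair offspring o1 = l1 ++ c2 ++ r1 and o2 = l2 ++ c1 ++ r2. Suppose the repair step is iterated |length(o1) − length(p1)| times, each iteration removing one entry from whichever of the two current offspring is longer than its corresponding parent and inserting that entry at an arbitrary position of the other offspring. Then the final offspring o1' and o2' satisfy: length(o1') = length(p1), length(o2') = length(p2), the multiset of entries of o1' together with o2' equals the multiset of entries of p1 together with p2, and all entries of o1' and o2' lie in {1,…,M}. In particular both offspring are valid array representations of plane forests with the same numbers of leaves as their respective parents. -/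
import Mathlib


/-- A rooted plane tree: a node carrying a finite ordered list of child subtrees.
A node with no children is a leaf. -/
inductive PTree : Type where
  | node : List PTree → PTree

namespace PTree

mutual
/-- Number of leaves of a plane tree. -/
def leaves : PTree → ℕ
  | .node [] => 1
  | .node (c :: cs) => c.leaves + leavesList cs

/-- Total number of leaves of a list of plane trees. -/
def leavesList : List PTree → ℕ
  | [] => 0
  | c :: cs => c.leaves + leavesList cs
end

mutual
/-- Height of a plane tree (a single leaf has height 1). -/
def height : PTree → ℕ
  | .node [] => 1
  | .node (c :: cs) => 1 + max c.height (heightList cs)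

/-- Maximum height among a list of plane trees (0 for the empty list). -/
def heightList : List PTree → ℕ
  | [] => 0
  | c :: cs => max c.height (heightList cs)
end

mutual
/-- Separation levels between consecutive leaves inside a tree whose root is at level `l`:
between two consecutive leaves lying in distinct children we record `l+1`
(one more than the level of their lowest common ancestor, which is the root). -/
def enc : PTree → ℕ → List ℕ
  | .node [], _ => []
  | .node (c :: cs), l => c.enc (l + 1) ++ encList cs (l + 1)

/-- Separation levels for a list of sibling subtrees all at level `l`, including
the separator `l` between consecutive subtrees. -/
def encList : List PTree → ℕ → List ℕ
  | [], _ => []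
  | c :: cs, l => (l :: c.enc l) ++ encList cs l
end

end PTree

/-- Total number of leaves of a plane forest. -/
def forestLeaves (F : List PTree) : ℕ := PTree.leavesList F

/-- Height of a plane forest: the maximum level of any of its nodes (roots are at level 1). -/
def forestHeight (F : List PTree) : ℕ := PTree.heightList F

/-- The separation array of a plane forest: for each pair of consecutive leaves
(numbered left to right), the level at which they separate (`1` if they lie in
different trees, and `1 +` the level of their lowest common ancestor otherwise). -/
def forestSep : List PTree → List ℕ
  | [] => []
  | t :: ts => t.enc 1 ++ PTree.encList ts 1

/-- `RemoveInsert x y x' y'` holds when `x'` is obtained from `x` by removing one entry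
and `y'` is obtained from `y` by inserting that same entry at an arbitrary position. -/
def RemoveInsert (x y x' y' : List ℕ) : Prop :=
  ∃ (u w c d : List ℕ) (e : ℕ),
    x = u ++ e :: w ∧ x' = u ++ w ∧ y = c ++ d ∧ y' = c ++ e :: d

/-- One iteration of the repair strategy of Algorithm 1, relative to the parent lengths
`n1` and `n2`: remove one entry from whichever of the two current offspring is longer
than its corresponding parent and insert that entry at an arbitrary position of the
other offspring. -/
def RepairStep (n1 n2 : ℕ) (s t : List ℕ × List ℕ) : Prop :=
  (n1 < s.1.length ∧ RemoveInsert s.1 s.2 t.1 t.2) ∨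
  (n2 < s.2.length ∧ RemoveInsert s.2 s.1 t.2 t.1)

/-- validity of hierarchical crossover with the repair strategy,
Algorithm 1. Let `p1 = l1 ++ c1 ++ r1` and `p2 = l2 ++ c2 ++ r2` be lists with all
entries in `{1,…,M}`, and form the pre-repair offspring `o1 = l1 ++ c2 ++ r1` and
`o2 = l2 ++ c1 ++ r2`. Suppose the repair step is iterated `|o1.length - p1.length|`
times, each iteration removing one entry from  whichever of the two current offspring is
longer than its corresponding parent and inserting it at an arbitrary position of the
other offspring. Then the final offspring have exactly the lengths of their respective
parents, the multiset of entries of the two offspring together equals that of the two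
parents together, and all entries of both offspring lie in `{1,…,M}` — i.e. both
offspring are valid array representations with the same numbers of leaves as their
respective parents. -/
theorem hierarchical_crossover_repair_valid (M : ℕ) (hM : 1 ≤ M)
    (l1 c1 r1 l2 c2 r2 p1 p2 o1 o2 : List ℕ)
    (hp1 : p1 = l1 ++ c1 ++ r1) (hp2 : p2 = l2 ++ c2 ++ r2)
    (hp1m : ∀ x ∈ p1, 1 ≤ x ∧ x ≤ M) (hp2m : ∀ x ∈ p2, 1 ≤ x ∧ x ≤ M)
    (ho1 : o1 = l1 ++ c2 ++ r1) (ho2 : o2 = l2 ++ c1 ++ r2)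
    (n : ℕ) (hn : (n : ℤ) = |(o1.length : ℤ) - (p1.length : ℤ)|)
    (f : ℕ → List ℕ × List ℕ) (hf0 : f 0 = (o1, o2))
    (hstep : ∀ i, i < n → RepairStep p1.length p2.length (f i) (f (i + 1))) :
    (f n).1.length = p1.length ∧ (f n).2.length = p2.length ∧
    ((f n).1 : Multiset ℕ) + ((f n).2 : Multiset ℕ) =
      (p1 : Multiset ℕ) + (p2 : Multiset ℕ) ∧
    (∀ x ∈ (f n).1, 1 ≤ x ∧ x ≤ M) ∧ (∀ x ∈ (f n).2, 1 ≤ x ∧ x ≤ M) := by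
  have key : ∀ i, i ≤ n →
      ((f i).1 : Multiset ℕ) + ((f i).2 : Multiset ℕ) =
        (p1 : Multiset ℕ) + (p2 : Multiset ℕ) ∧
      (f i).1.length + (f i).2.length = p1.length + p2.length ∧
      |((f i).1.length : ℤ) - (p1.length : ℤ)| = (n : ℤ) - i := by
    intro i hi
    induction i with
    | zero =>
      rw [hf0]
      refine ⟨?_, ?_, ?_⟩
      · subst hp1 hp2 ho1 ho2
        simp only [← Multiset.coe_add]
        abel
      · subst hp1 hp2 ho1 ho2; simp [List.length_append]; omega
      · simpa using hn.symm
    | succ i ih =>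
      have hi' : i ≤ n := Nat.le_of_succ_le hi
      obtain ⟨hm, hl, hd⟩ := ih hi'
      rcases hstep i (Nat.lt_of_succ_le hi) with ⟨hlt, u, w, c, d, e, h1, h2, h3, h4⟩ |
        ⟨hlt, u, w, c, d, e, h1, h2, h3, h4⟩
      · refine ⟨?_, ?_, ?_⟩
        · rw [h2, h4, ← hm, h1, h3]
          simp only [← Multiset.coe_add, ← Multiset.cons_coe, ← Multiset.singleton_add]
          abel
        · have := congrArg List.length h1
          have := congrArg List.length h2
          have := congrArg List.length h3
          have := congrArg List.length h4
          simp [List.length_append] at *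
          omega
        · have e1 := congrArg List.length h1
          have e2 := congrArg List.length h2
          simp [List.length_append] at e1 e2
          have : ((f (i+1)).1.length : ℤ) = (f i).1.length - 1 := by omega
          rw [this]
          have hpos : (p1.length : ℤ) < (f i).1.length := by exact_mod_cast hlt
          rw [abs_of_pos (by omega)] at hd
          rw [abs_of_nonneg (by omega)]
          push_cast
          omega
      · refine ⟨?_, ?_, ?_⟩
        · rw [h2, h4, ← hm, h1, h3]
          simp only [← Multiset.coe_add, ← Multiset.cons_coe, ← Multiset.singleton_add]
          abel
        · have e1 := congrArg List.length h1
          have e2 := congrArg List.length h2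
          have e3 := congrArg List.length h3
          have e4 := congrArg List.length h4
          simp [List.length_append] at e1 e2 e3 e4
          omega
        · have e1 := congrArg List.length h1
          have e2 := congrArg List.length h2
          have e3 := congrArg List.length h3
          have e4 := congrArg List.length h4
          simp [List.length_append] at e1 e2 e3 e4
          have hpos : (p2.length : ℤ) < (f i).2.length := by exact_mod_cast hlt
          have hneg : ((f i).1.length : ℤ) - p1.length < 0 := by omega
          rw [abs_of_neg hneg] at hd
          rw [abs_of_nonpos (by push_cast; omega)]
          push_cast
          omega
  obtain ⟨hm, hl, hd⟩ := key n le_rfl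
  have hlen1 : (f n).1.length = p1.length := by
    have : |((f n).1.length : ℤ) - p1.length| = 0 := by rw [hd]; ring
    have := abs_eq_zero.mp this
    omega
  refine ⟨hlen1, by omega, hm, ?_, ?_⟩
  · intro x hx
    have : x ∈ (p1 : Multiset ℕ) + (p2 : Multiset ℕ) := by
      rw [← hm]; simp [hx]
    simp [Multiset.mem_add] at this
    rcases this with h | h
    · exact hp1m x h
    · exact hp2m x h
  · intro x hx
    have : x ∈ (p1 : Multiset ℕ) + (p2 : Multiset ℕ) := by
      rw [← hm]; simp [hx]
    simp [Multiset.mem_add] at this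
    rcases this with h | h
    · exact hp1m x h
    · exact hp2m x h
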